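/- arXiv:2003.13771 — 2 statements merged into one kernel-verified Lean document; each statement's English description precedes it below -/
import Mathlib

section
/- Multiple robustness, case (i) with correct exposure density: let Q̄ : ℝ × 𝒲 → ℝ be bounded measurable (an arbitrary outcome regression), define D(w, a, y) := H₀(a, w)(y − Q̄(a, w)) + Q̄(a + δ(w), w) − ψ₀, and let G : ℝ × 𝒲 → ℝ be a bounded measurable function satisfying G(Y, W) = E[D(W, A, Y) ∣ σ(Y, W)] a.s. (the correctly specified conditional influence-function regression). Then for every measurable g : ℝ × 𝒲 → ℝ with ε' ≤ g ≤ 1 for some ε' > 0 (an arbitrary, possibly incorrect sampling mechanism), E[(C / g(Y, W)) D(W, A, Y) − (C / g(Y, W) − 1) G(Y, W)] = 0. -/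
/-!
Write the integrand as `(C / g) (D - G) + G`. Since `G (Y, W) = E[D | Y, W]`, the second term has
mean `E[D]`, and `E[D] = 0`: the tower property replaces `Y` by `Q̄₀ (A, W)` in the residual, and
the density ratio `H₀` turns `E[H₀ (Q̄₀ - Q̄)(A, W)]` into `E[(Q̄₀ - Q̄)(A + δ W, W)]`, because
Lebesgue measure is translation invariant. For the first term, conditional independence of `C`
and `A` given `(Y, W)` gives `E[C | Y, W, A] = E[C | Y, W]`, hence
`E[(C / g) (D - G)] = E[(E[C | Y, W] / g) E[D - G | Y, W]] = 0`, whatever `g` is.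
-/

open MeasureTheory ProbabilityTheory
open scoped ENNReal

lemma MeasurableSpace.sup_eq_generateFrom_image2_inter {Ω : Type*} (m₁ m₂ : MeasurableSpace Ω) :
    m₁ ⊔ m₂ = generateFrom
      (Set.image2 (· ∩ ·) {s | MeasurableSet[m₁] s} {t | MeasurableSet[m₂] t}) := by
  refine le_antisymm (sup_le (fun s hs => ?_) fun t ht => ?_) (generateFrom_le ?_)
  · exact measurableSet_generateFrom ⟨s, hs, Set.univ, .univ, Set.inter_univ s⟩
  · exact measurableSet_generateFrom ⟨Set.univ, .univ, t, ht, Set.univ_inter t⟩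
  · rintro _ ⟨s, hs, t, ht, rfl⟩
    exact (le_sup_left (b := m₂) s hs).inter (le_sup_right (a := m₁) t ht)

lemma isPiSystem_image2_inter {Ω : Type*} (m₁ m₂ : MeasurableSpace Ω) :
    IsPiSystem (Set.image2 (· ∩ ·) {s | MeasurableSet[m₁] s} {t | MeasurableSet[m₂] t}) := by
  rintro _ ⟨s₁, hs₁, t₁, ht₁, rfl⟩ _ ⟨s₂, hs₂, t₂, ht₂, rfl⟩ -
  refine ⟨s₁ ∩ s₂, hs₁.inter hs₂, t₁ ∩ t₂, ht₁.inter ht₂, ?_⟩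
  simp only [Set.inter_inter_inter_comm]

lemma setIntegral_eq_of_isPiSystem {Ω E : Type*} [NormedAddCommGroup E] [NormedSpace ℝ E]
    {m mΩ : MeasurableSpace Ω} {μ : Measure Ω} (hm : m ≤ mΩ) {π : Set (Set Ω)}
    (h_gen : m = MeasurableSpace.generateFrom π) (hπ : IsPiSystem π) {f g : Ω → E}
    (hf : Integrable f μ) (hg : Integrable g μ) (h_univ : ∫ x, f x ∂μ = ∫ x, g x ∂μ)
    (h_basic : ∀ s ∈ π, ∫ x in s, f x ∂μ = ∫ x in s, g x ∂μ)
    {s : Set Ω} (hs : MeasurableSet[m] s) : ∫ x in s, f x ∂μ = ∫ x in s, g x ∂μ := by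
  induction s, hs using MeasurableSpace.induction_on_inter h_gen hπ with
  | empty => simp
  | basic s hs => exact h_basic s hs
  | compl s hs ih =>
    have hf_split := integral_add_compl (hm s hs) hf
    have hg_split := integral_add_compl (hm s hs) hg
    rw [← sub_eq_of_eq_add' hf_split.symm, ← sub_eq_of_eq_add' hg_split.symm, ih, h_univ]
  | iUnion s hdisj hs ih =>
    rw [integral_iUnion (fun i => hm _ (hs i)) hdisj hf.integrableOn,
      integral_iUnion (fun i => hm _ (hs i)) hdisj hg.integrableOn]
    exact tsum_congr ih

section CondExp

variable {Ω : Type*} {m 𝒢 : MeasurableSpace Ω} [mΩ : MeasurableSpace Ω] {μ : Measure Ω}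

lemma integral_mul_condExp_of_stronglyMeasurable (hm : m ≤ mΩ) [SigmaFinite (μ.trim hm)]
    {f g : Ω → ℝ} (hf : StronglyMeasurable[m] f) (hfg : Integrable (f * g) μ)
    (hg : Integrable g μ) :
    ∫ x, f x * (μ[g | m]) x ∂μ = ∫ x, f x * g x ∂μ := by
  rw [← integral_condExp hm (f := fun x => f x * g x)]
  exact integral_congr_ae (condExp_mul_of_stronglyMeasurable_left hf hfg hg).symm

lemma condExp_sup_comap_ae_eq_of_condIndepFun {β : Type*} [StandardBorelSpace Ω]
    [MeasurableSpace β] (hm : m ≤ mΩ) [IsFiniteMeasure μ] {C : Ω → ℝ} {A : Ω → β}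
    (hC : Measurable C) (hA : Measurable A) (hC01 : ∀ ω, C ω = 0 ∨ C ω = 1)
    (hCA : CondIndepFun m hm C A μ) :
    μ[C | m ⊔ MeasurableSpace.comap A inferInstance] =ᵐ[μ] μ[C | m] := by
  have hC_eq : ∀ B : Set Ω, B.indicator C = (C ⁻¹' {1} ∩ B).indicator fun _ => (1 : ℝ) := by
    intro B
    funext ω
    by_cases hB : ω ∈ B <;> rcases hC01 ω with h | h <;> simp [Set.indicator, hB, h]
  have hC_ind : C = (C ⁻¹' {1}).indicator fun _ => (1 : ℝ) := by
    simpa using hC_eq Set.univ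
  have h_ind_int : ∀ {B : Set Ω}, MeasurableSet B → Integrable (B.indicator fun _ => (1 : ℝ)) μ :=
    fun hB => (integrable_const 1).indicator hB
  have hE : MeasurableSet (C ⁻¹' {1}) := hC (measurableSet_singleton 1)
  have hC_int : Integrable C μ := hC_ind ▸ h_ind_int hE
  have h𝒢 : m ⊔ MeasurableSpace.comap A inferInstance ≤ mΩ := sup_le hm hA.comap_le
  refine (ae_eq_condExp_of_forall_setIntegral_eq h𝒢 hC_int
    (fun s _ _ => integrable_condExp.integrableOn) (fun s hs _ => ?_)
    ⟨_, stronglyMeasurable_condExp.mono le_sup_left, .rfl⟩).symm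
  refine setIntegral_eq_of_isPiSystem h𝒢 (MeasurableSpace.sup_eq_generateFrom_image2_inter _ _)
    (isPiSystem_image2_inter _ _) integrable_condExp hC_int (integral_condExp hm) ?_ hs
  rintro _ ⟨t, ht, _, ⟨v, hv, rfl⟩, rfl⟩
  have hB : MeasurableSet (A ⁻¹' v) := hA hv
  have h_mul_ind : (A ⁻¹' v).indicator (μ[C | m])
      = μ[C | m] * (A ⁻¹' v).indicator fun _ => (1 : ℝ) := by
    funext ω
    by_cases h : ω ∈ A ⁻¹' v <;> simp [h]
  have h_int : Integrable (μ[C | m] * (A ⁻¹' v).indicator fun _ => (1 : ℝ)) μ :=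
    h_mul_ind ▸ integrable_condExp.indicator hB
  have h_pull := condExp_mul_of_stronglyMeasurable_left stronglyMeasurable_condExp h_int
    (h_ind_int hB)
  have h_indep := (condIndepFun_iff_condExp_inter_preimage_eq_mul hC hA).1 hCA {1} v
    (measurableSet_singleton 1) hv
  calc ∫ x in t ∩ A ⁻¹' v, (μ[C | m]) x ∂μ
      = ∫ x in t, (μ[C | m] * (A ⁻¹' v).indicator fun _ => (1 : ℝ)) x ∂μ := by
        rw [← setIntegral_indicator hB, h_mul_ind]
    _ = ∫ x in t, (μ⟦C ⁻¹' {1} ∩ A ⁻¹' v | m⟧) x ∂μ := by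
        rw [← setIntegral_condExp hm h_int ht]
        refine setIntegral_congr_ae (hm t ht) ?_
        filter_upwards [h_pull, h_indep] with x h_pull h_indep _
        rw [h_pull, h_indep, Pi.mul_apply, ← hC_ind]
    _ = ∫ x in t ∩ A ⁻¹' v, C x ∂μ := by
        rw [setIntegral_condExp hm (h_ind_int (hE.inter hB)) ht, ← hC_eq,
          setIntegral_indicator hB]

lemma integral_mul_mul_eq_zero_of_condExp_eq_zero (hm𝒢 : m ≤ 𝒢) (h𝒢 : 𝒢 ≤ mΩ)
    [IsFiniteMeasure μ]
    {w C ξ : Ω → ℝ} (hw : StronglyMeasurable[m] w) {K : ℝ} (hw_bd : ∀ ω, |w ω| ≤ K)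
    (hC : Measurable C) {R : ℝ} (hC_bd : ∀ ω, |C ω| ≤ R) (hC_cond : μ[C | 𝒢] =ᵐ[μ] μ[C | m])
    (hξ : StronglyMeasurable[𝒢] ξ) (hξ_int : Integrable ξ μ) (hξ_cond : μ[ξ | m] =ᵐ[μ] 0) :
    ∫ ω, w ω * C ω * ξ ω ∂μ = 0 := by
  have hm : m ≤ mΩ := hm𝒢.trans h𝒢
  have hC_int : Integrable C μ := .of_bound hC.aestronglyMeasurable R (.of_forall hC_bd)
  have hwξ_int : Integrable (w * ξ) μ :=
    hξ_int.bdd_mul (hw.mono hm).aestronglyMeasurable (.of_forall hw_bd)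
  have hwC_bd : ∀ᵐ ω ∂μ, ‖w ω * (μ[C | m]) ω‖ ≤ K * R := by
    filter_upwards [ae_bdd_abs_condExp_of_ae_bdd_abs (m := m) (.of_forall hC_bd)] with ω hω
    exact norm_mul_le_of_le (hw_bd ω) hω
  calc ∫ ω, w ω * C ω * ξ ω ∂μ = ∫ ω, (w * ξ) ω * C ω ∂μ := by
        simp only [Pi.mul_apply, mul_right_comm]
    _ = ∫ ω, (w * ξ) ω * (μ[C | m]) ω ∂μ := by
        rw [← integral_mul_condExp_of_stronglyMeasurable h𝒢 ((hw.mono hm𝒢).mul hξ)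
          (hwξ_int.mul_bdd hC.aestronglyMeasurable (.of_forall hC_bd)) hC_int]
        exact integral_congr_ae (hC_cond.mono fun ω h => by dsimp only; rw [h])
    _ = ∫ ω, (w * μ[C | m]) ω * (μ[ξ | m]) ω ∂μ := by
        have hwC_meas := (hw.mono hm).mul ((stronglyMeasurable_condExp (f := C) (μ := μ)).mono hm)
        rw [integral_mul_condExp_of_stronglyMeasurable hm (hw.mul stronglyMeasurable_condExp)
          (hξ_int.bdd_mul hwC_meas.aestronglyMeasurable hwC_bd) hξ_int]
        simp only [Pi.mul_apply, mul_right_comm]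
    _ = 0 := by
        rw [integral_congr_ae (hξ_cond.mono fun ω h => by rw [h, Pi.zero_apply, mul_zero]),
          integral_zero]

lemma integral_ipw_augmented_eq_integral (hm𝒢 : m ≤ 𝒢) (h𝒢 : 𝒢 ≤ mΩ) [IsFiniteMeasure μ]
    {w C D G : Ω → ℝ} (hw : StronglyMeasurable[m] w) {K : ℝ} (hw_bd : ∀ ω, |w ω| ≤ K)
    (hC : Measurable C) {R : ℝ} (hC_bd : ∀ ω, |C ω| ≤ R) (hC_cond : μ[C | 𝒢] =ᵐ[μ] μ[C | m])
    (hD : StronglyMeasurable[𝒢] D) (hD_int : Integrable D μ) (hG : StronglyMeasurable[m] G)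
    (hG_cond : μ[D | m] =ᵐ[μ] G) :
    ∫ ω, (C ω * w ω * D ω - (C ω * w ω - 1) * G ω) ∂μ = ∫ ω, D ω ∂μ := by
  have hm : m ≤ mΩ := hm𝒢.trans h𝒢
  have hG_int : Integrable G μ := integrable_condExp.congr hG_cond
  have h_resid_cond : μ[D - G | m] =ᵐ[μ] 0 := by
    filter_upwards [condExp_sub hD_int hG_int m, hG_cond] with ω h_sub h_G
    rw [h_sub, Pi.sub_apply, h_G, condExp_of_stronglyMeasurable hm hG hG_int, sub_self,
      Pi.zero_apply]
  have h_zero := integral_mul_mul_eq_zero_of_condExp_eq_zero hm𝒢 h𝒢 hw hw_bd hC hC_bd hC_cond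
    (hD.sub (hG.mono hm𝒢)) (hD_int.sub hG_int) h_resid_cond
  have h_int : Integrable (fun ω => w ω * C ω * (D - G) ω) μ :=
    (hD_int.sub hG_int).bdd_mul ((hw.mono hm).measurable.mul hC).aestronglyMeasurable
      (.of_forall fun ω => norm_mul_le_of_le (hw_bd ω) (hC_bd ω))
  calc ∫ ω, (C ω * w ω * D ω - (C ω * w ω - 1) * G ω) ∂μ
      = ∫ ω, (w ω * C ω * (D - G) ω + G ω) ∂μ := by
        congr 1
        funext ω
        rw [Pi.sub_apply]
        ring
    _ = ∫ ω, D ω ∂μ := by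
        rw [integral_add h_int hG_int, h_zero, zero_add, integral_congr_ae hG_cond.symm,
          integral_condExp hm]

lemma integral_ipw_augmented_eq_integral_of_condIndepFun {𝒱 β : Type*} [StandardBorelSpace Ω]
    [MeasurableSpace 𝒱] [MeasurableSpace β] [IsFiniteMeasure μ] {V : Ω → 𝒱} {A : Ω → β}
    (hV : Measurable V) (hA : Measurable A)
    {C : Ω → ℝ} (hC : Measurable C) (hC01 : ∀ ω, C ω = 0 ∨ C ω = 1)
    (hCA : CondIndepFun (MeasurableSpace.comap V inferInstance) hV.comap_le C A μ)
    {g : 𝒱 → ℝ} (hg : Measurable g) {ε : ℝ} (hε : 0 < ε) (hg_bd : ∀ v, ε ≤ g v)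
    {d : 𝒱 × β → ℝ} (hd : Measurable d) (hd_int : Integrable (fun ω => d (V ω, A ω)) μ)
    {G : 𝒱 → ℝ} (hG : Measurable G)
    (hG_cond : μ[fun ω => d (V ω, A ω) | MeasurableSpace.comap V inferInstance]
      =ᵐ[μ] fun ω => G (V ω)) :
    ∫ ω, (C ω / g (V ω) * d (V ω, A ω) - (C ω / g (V ω) - 1) * G (V ω)) ∂μ
      = ∫ ω, d (V ω, A ω) ∂μ := by
  have hV_m := comap_measurable (m := (inferInstance : MeasurableSpace 𝒱)) V
  have hVA_m : Measurable[MeasurableSpace.comap V inferInstance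
      ⊔ MeasurableSpace.comap A inferInstance] fun ω => (V ω, A ω) := by
    rw [← MeasurableSpace.comap_prodMk]
    exact comap_measurable _
  have hg_inv_bd : ∀ v, |(g v)⁻¹| ≤ ε⁻¹ := fun v => by
    rw [abs_inv, abs_of_pos (hε.trans_le (hg_bd v))]
    exact inv_anti₀ hε (hg_bd v)
  have hC_bd : ∀ ω, |C ω| ≤ 1 := fun ω => by rcases hC01 ω with h | h <;> simp [h]
  simp_rw [div_eq_mul_inv]
  exact integral_ipw_augmented_eq_integral le_sup_left (sup_le hV.comap_le hA.comap_le)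
    (hg.comp hV_m).inv.stronglyMeasurable (fun ω => hg_inv_bd (V ω)) hC hC_bd
    (condExp_sup_comap_ae_eq_of_condIndepFun _ hC hA hC01 hCA) (hd.comp hVA_m).stronglyMeasurable
    hd_int (hG.comp hV_m).stronglyMeasurable hG_cond

end CondExp

section DensityRatio

variable {𝒲 : Type*} {q : ℝ × 𝒲 → ℝ} {δ : 𝒲 → ℝ}

noncomputable def densityRatio (q : ℝ × 𝒲 → ℝ) (δ : 𝒲 → ℝ) (x : ℝ × 𝒲) : ℝ :=
  q (x.1 - δ x.2, x.2) / q x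

lemma measurable_densityRatio [MeasurableSpace 𝒲] (hq : Measurable q) (hδ : Measurable δ) :
    Measurable (densityRatio q δ) := by
  unfold densityRatio
  fun_prop

lemma densityRatio_nonneg (hq : ∀ x, 0 ≤ q x) (x : ℝ × 𝒲) : 0 ≤ densityRatio q δ x :=
  div_nonneg (hq _) (hq _)

lemma densityRatio_mul_self (hq : ∀ x, 0 < q x) (a : ℝ) (w : 𝒲) :
    densityRatio q δ (a, w) * q (a, w) = q (a - δ w, w) :=
  div_mul_cancel₀ _ (hq _).ne'

end DensityRatio

section DensityTrunc

variable {𝒲 : Type*} {q : ℝ × 𝒲 → ℝ} {f : ℝ × 𝒲 → ℝ≥0∞}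

noncomputable def densityTrunc (q : ℝ × 𝒲 → ℝ) (f : ℝ × 𝒲 → ℝ≥0∞) (n : ℕ) (x : ℝ × 𝒲) :
    ℝ≥0∞ :=
  if |x.1| ≤ n ∧ q x ≤ n then min (f x) n else 0

lemma measurable_densityTrunc [MeasurableSpace 𝒲] (hq : Measurable q) (hf : Measurable f)
    (n : ℕ) : Measurable (densityTrunc q f n) :=
  Measurable.ite ((measurableSet_le measurable_fst.abs measurable_const).inter
    (measurableSet_le hq measurable_const)) (hf.min measurable_const) measurable_const

lemma densityTrunc_le (n : ℕ) (x : ℝ × 𝒲) : densityTrunc q f n x ≤ n := by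
  unfold densityTrunc
  split_ifs
  exacts [min_le_right _ _, bot_le]

lemma densityTrunc_mono : Monotone (densityTrunc q f) := fun m n hmn x => by
  have hmn' : (m : ℝ) ≤ n := by exact_mod_cast hmn
  unfold densityTrunc
  split_ifs with hm hn hn
  · exact min_le_min le_rfl (by exact_mod_cast hmn)
  · exact absurd ⟨hm.1.trans hmn', hm.2.trans hmn'⟩ hn
  all_goals exact bot_le

lemma iSup_densityTrunc (x : ℝ × 𝒲) : ⨆ n, densityTrunc q f n x = f x := by
  refine le_antisymm (iSup_le fun n => ?_) ?_
  · unfold densityTrunc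
    split_ifs
    exacts [min_le_left _ _, bot_le]
  obtain ⟨N, hN⟩ := exists_nat_ge (max |x.1| (q x))
  calc f x = ⨆ n : ℕ, min (f x) n := by
        rw [← inf_iSup_eq, ENNReal.iSup_natCast, inf_top_eq]
    _ ≤ ⨆ n, densityTrunc q f n x := iSup_le fun n => le_iSup_of_le (max n N) <| by
        have hN' : max |x.1| (q x) ≤ ((max n N : ℕ) : ℝ) := hN.trans (by simp)
        rw [densityTrunc, if_pos ⟨(le_max_left _ _).trans hN', (le_max_right _ _).trans hN'⟩]
        exact min_le_min le_rfl (by exact_mod_cast le_max_left n N)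

lemma lintegral_densityTrunc_mul_le (n : ℕ) (w : 𝒲) :
    ∫⁻ a, densityTrunc q f n (a, w) * ENNReal.ofReal (q (a, w))
      ≤ (n * n : ℝ≥0∞) * volume (Set.Icc (-(n : ℝ)) n) := by
  rw [← lintegral_indicator_const measurableSet_Icc]
  refine lintegral_mono fun a => ?_
  unfold densityTrunc
  split_ifs with hx
  · rw [Set.indicator_of_mem (show a ∈ Set.Icc (-(n : ℝ)) n from abs_le.1 hx.1)]
    exact mul_le_mul' (min_le_right _ _)
      (ENNReal.ofReal_le_of_le_toReal (by simpa using hx.2))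
  · simp

end DensityTrunc

section CondDensity

variable {Ω 𝒲 : Type*} [MeasurableSpace Ω] [MeasurableSpace 𝒲]

structure HasCondDensity (P : Measure Ω) (A : Ω → ℝ) (W : Ω → 𝒲) (q : ℝ × 𝒲 → ℝ) : Prop where
  measurable : Measurable q
  nonneg : ∀ x, 0 ≤ q x
  integral_comp : ∀ f : ℝ × 𝒲 → ℝ, Measurable f → (∃ M : ℝ, ∀ x, |f x| ≤ M) →
    ∫ ω, f (A ω, W ω) ∂P = ∫ ω, (∫ a : ℝ, f (a, W ω) * q (a, W ω)) ∂P

variable {q : ℝ × 𝒲 → ℝ} {δ : 𝒲 → ℝ} {P : Measure Ω} [IsFiniteMeasure P]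
  {W : Ω → 𝒲} {A : Ω → ℝ}

namespace HasCondDensity

-- A divergent inner Bochner integral would be `0`: the bound `K` is what lets the identity for
-- bounded test functions pass to `lintegral`s.
lemma lintegral_eq_of_bounded (hq : HasCondDensity P A W q) (hA : Measurable A)
    (hW : Measurable W) {t : ℝ × 𝒲 → ℝ≥0∞} (ht : Measurable t) {c K : ℝ≥0∞} (hc : c ≠ ∞)
    (hK : K ≠ ∞) (ht_le : ∀ x, t x ≤ c)
    (h_inner : ∀ w, ∫⁻ a, t (a, w) * ENNReal.ofReal (q (a, w)) ≤ K) :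
    ∫⁻ ω, t (A ω, W ω) ∂P = ∫⁻ ω, (∫⁻ a : ℝ, t (a, W ω) * ENNReal.ofReal (q (a, W ω))) ∂P := by
  have ht_lt : ∀ x, t x < ∞ := fun x => (ht_le x).trans_lt hc.lt_top
  have h_inner_meas : Measurable fun ω => ∫⁻ a, t (a, W ω) * ENNReal.ofReal (q (a, W ω)) :=
    ((ht.mul hq.measurable.ennreal_ofReal).comp
      (measurable_snd.prodMk (hW.comp measurable_fst))).lintegral_prod_right'
  have h_real_inner : ∀ w, ∫ a, (t (a, w)).toReal * q (a, w)
      = (∫⁻ a, t (a, w) * ENNReal.ofReal (q (a, w))).toReal := fun w => by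
    rw [← integral_toReal (f := fun a => t (a, w) * ENNReal.ofReal (q (a, w)))
      ((ht.mul hq.measurable.ennreal_ofReal).comp measurable_prodMk_right).aemeasurable
      (.of_forall fun a => ENNReal.mul_lt_top (ht_lt _) ENNReal.ofReal_lt_top)]
    simp only [ENNReal.toReal_mul, ENNReal.toReal_ofReal (hq.nonneg _)]
  have h_real := hq.integral_comp (fun x => (t x).toReal) ht.ennreal_toReal
    ⟨c.toReal, fun x => by
      rw [abs_of_nonneg ENNReal.toReal_nonneg]
      exact ENNReal.toReal_mono hc (ht_le x)⟩
  simp only [h_real_inner] at h_real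
  rw [integral_toReal (f := fun ω => t (A ω, W ω)) (ht.comp (hA.prodMk hW)).aemeasurable
      (.of_forall fun ω => ht_lt _),
    integral_toReal h_inner_meas.aemeasurable
      (.of_forall fun ω => (h_inner _).trans_lt hK.lt_top)] at h_real
  refine (ENNReal.toReal_eq_toReal_iff' ?_ ?_).1 h_real
  · exact (lintegral_mono fun ω => ht_le _).trans_lt
      (by simpa using ENNReal.mul_lt_top hc.lt_top (measure_lt_top P Set.univ)) |>.ne
  · exact (lintegral_mono fun ω => h_inner _).trans_lt
      (by simpa using ENNReal.mul_lt_top hK.lt_top (measure_lt_top P Set.univ)) |>.ne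

lemma lintegral_eq (hq : HasCondDensity P A W q) (hA : Measurable A) (hW : Measurable W)
    {f : ℝ × 𝒲 → ℝ≥0∞} (hf : Measurable f) :
    ∫⁻ ω, f (A ω, W ω) ∂P = ∫⁻ ω, (∫⁻ a : ℝ, f (a, W ω) * ENNReal.ofReal (q (a, W ω))) ∂P := by
  set t := densityTrunc q f
  have ht_meas : ∀ n, Measurable (t n) := fun n => measurable_densityTrunc hq.measurable hf n
  have h_inner_meas : ∀ n, Measurable fun ω =>
      ∫⁻ a : ℝ, t n (a, W ω) * ENNReal.ofReal (q (a, W ω)) := fun n =>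
    (((ht_meas n).mul hq.measurable.ennreal_ofReal).comp
      (measurable_snd.prodMk (hW.comp measurable_fst))).lintegral_prod_right'
  have h_trunc : ∀ n, ∫⁻ ω, t n (A ω, W ω) ∂P
      = ∫⁻ ω, (∫⁻ a : ℝ, t n (a, W ω) * ENNReal.ofReal (q (a, W ω))) ∂P := fun n =>
    hq.lintegral_eq_of_bounded hA hW (ht_meas n) (ENNReal.natCast_ne_top n)
      (ENNReal.mul_ne_top (ENNReal.mul_ne_top (ENNReal.natCast_ne_top n)
        (ENNReal.natCast_ne_top n)) measure_Icc_lt_top.ne)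
      (densityTrunc_le n) (lintegral_densityTrunc_mul_le n)
  calc ∫⁻ ω, f (A ω, W ω) ∂P = ∫⁻ ω, ⨆ n, t n (A ω, W ω) ∂P := by simp_rw [t, iSup_densityTrunc]
    _ = ⨆ n, ∫⁻ ω, (∫⁻ a : ℝ, t n (a, W ω) * ENNReal.ofReal (q (a, W ω))) ∂P := by
        rw [lintegral_iSup (f := fun n ω => t n (A ω, W ω))
          (fun n => (ht_meas n).comp (hA.prodMk hW)) (fun m n hmn ω => densityTrunc_mono hmn _)]
        exact iSup_congr h_trunc
    _ = ∫⁻ ω, ⨆ n, (∫⁻ a : ℝ, t n (a, W ω) * ENNReal.ofReal (q (a, W ω))) ∂P :=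
        (lintegral_iSup h_inner_meas fun m n hmn ω =>
          lintegral_mono fun a => mul_le_mul_left (densityTrunc_mono hmn _) _).symm
    _ = ∫⁻ ω, (∫⁻ a : ℝ, f (a, W ω) * ENNReal.ofReal (q (a, W ω))) ∂P := by
        refine lintegral_congr fun ω => ?_
        rw [← lintegral_iSup (f := fun n a => t n (a, W ω) * ENNReal.ofReal (q (a, W ω)))
          (fun n => ((ht_meas n).mul hq.measurable.ennreal_ofReal).comp
          measurable_prodMk_right) fun m n hmn a => mul_le_mul_left (densityTrunc_mono hmn _) _]
        simp_rw [← ENNReal.iSup_mul, t, iSup_densityTrunc]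

lemma lintegral_densityRatio_mul (hq : HasCondDensity P A W q) (hA : Measurable A)
    (hW : Measurable W) (hq_pos : ∀ x, 0 < q x) (hδ : Measurable δ)
    {F : ℝ × 𝒲 → ℝ≥0∞} (hF : Measurable F) :
    ∫⁻ ω, ENNReal.ofReal (densityRatio q δ (A ω, W ω)) * F (A ω, W ω) ∂P
      = ∫⁻ ω, F (A ω + δ (W ω), W ω) ∂P := by
  have hF_shift : Measurable fun x : ℝ × 𝒲 => F (x.1 + δ x.2, x.2) :=
    hF.comp ((measurable_fst.add (hδ.comp measurable_snd)).prodMk measurable_snd)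
  rw [hq.lintegral_eq hA hW (f := fun x => ENNReal.ofReal (densityRatio q δ x) * F x)
      ((measurable_densityRatio hq.measurable hδ).ennreal_ofReal.mul hF),
    hq.lintegral_eq hA hW hF_shift]
  refine lintegral_congr fun ω => ?_
  calc ∫⁻ a, ENNReal.ofReal (densityRatio q δ (a, W ω)) * F (a, W ω) * ENNReal.ofReal (q (a, W ω))
      = ∫⁻ a, F (a, W ω) * ENNReal.ofReal (q (a - δ (W ω), W ω)) := by
        refine lintegral_congr fun a => ?_
        rw [← densityRatio_mul_self hq_pos, ENNReal.ofReal_mul (densityRatio_nonneg hq.nonneg _)]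
        ring
    _ = ∫⁻ a, F (a + δ (W ω), W ω) * ENNReal.ofReal (q (a, W ω)) := by
        rw [← lintegral_add_right_eq_self _ (δ (W ω))]
        simp only [add_sub_cancel_right]

lemma integrable_densityRatio (hq : HasCondDensity P A W q) (hA : Measurable A)
    (hW : Measurable W) (hq_pos : ∀ x, 0 < q x) (hδ : Measurable δ) :
    Integrable (fun ω => densityRatio q δ (A ω, W ω)) P := by
  refine ⟨((measurable_densityRatio hq.measurable hδ).comp (hA.prodMk hW)).aestronglyMeasurable,
    ?_⟩
  rw [hasFiniteIntegral_iff_ofReal (.of_forall fun ω => densityRatio_nonneg hq.nonneg _)]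
  have h := hq.lintegral_densityRatio_mul hA hW hq_pos hδ (F := fun _ => 1) measurable_const
  simp only [mul_one, lintegral_const, one_mul] at h
  exact h ▸ measure_lt_top P Set.univ

lemma integral_densityRatio_mul_of_nonneg (hq : HasCondDensity P A W q) (hA : Measurable A)
    (hW : Measurable W) (hq_pos : ∀ x, 0 < q x) (hδ : Measurable δ)
    {F : ℝ × 𝒲 → ℝ} (hF : Measurable F) (hF_nonneg : ∀ x, 0 ≤ F x) :
    ∫ ω, densityRatio q δ (A ω, W ω) * F (A ω, W ω) ∂P = ∫ ω, F (A ω + δ (W ω), W ω) ∂P := by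
  have hH_nonneg := densityRatio_nonneg (δ := δ) hq.nonneg
  rw [integral_eq_lintegral_of_nonneg_ae
      (.of_forall fun ω => mul_nonneg (hH_nonneg _) (hF_nonneg _))
      (((measurable_densityRatio hq.measurable hδ).mul hF).comp
        (hA.prodMk hW)).aestronglyMeasurable,
    integral_eq_lintegral_of_nonneg_ae (f := fun ω => F (A ω + δ (W ω), W ω))
      (.of_forall fun ω => hF_nonneg _)
      (hF.comp ((hA.add (hδ.comp hW)).prodMk hW)).aestronglyMeasurable]
  simp_rw [ENNReal.ofReal_mul (hH_nonneg _)]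
  rw [hq.lintegral_densityRatio_mul hA hW hq_pos hδ hF.ennreal_ofReal]

lemma integral_densityRatio_mul (hq : HasCondDensity P A W q) (hA : Measurable A)
    (hW : Measurable W) (hq_pos : ∀ x, 0 < q x) (hδ : Measurable δ)
    {F : ℝ × 𝒲 → ℝ} (hF : Measurable F) {M : ℝ} (hF_bd : ∀ x, |F x| ≤ M) :
    ∫ ω, densityRatio q δ (A ω, W ω) * F (A ω, W ω) ∂P = ∫ ω, F (A ω + δ (W ω), W ω) ∂P := by
  have hH_int := hq.integrable_densityRatio hA hW hq_pos hδ
  have h_pos := hq.integral_densityRatio_mul_of_nonneg hA hW hq_pos hδ (hF.add_const M)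
    fun x => by linarith [neg_abs_le (F x), hF_bd x]
  have h_const := hq.integral_densityRatio_mul_of_nonneg hA hW hq_pos hδ
    (measurable_const (a := M)) fun x => (abs_nonneg _).trans (hF_bd x)
  have hF_int : Integrable (fun ω => F (A ω + δ (W ω), W ω)) P :=
    .of_bound (hF.comp ((hA.add (hδ.comp hW)).prodMk hW)).aestronglyMeasurable M
      (.of_forall fun ω => hF_bd _)
  have hHF_int : Integrable (fun ω => densityRatio q δ (A ω, W ω) * F (A ω, W ω)) P :=
    hH_int.mul_bdd (hF.comp (hA.prodMk hW)).aestronglyMeasurable (.of_forall fun ω => hF_bd _)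
  simp only [mul_add] at h_pos
  rw [integral_add hHF_int (hH_int.mul_const M), integral_add hF_int (integrable_const M),
    h_const] at h_pos
  linarith

variable {Y : Ω → ℝ} {Q₀ Q : ℝ × 𝒲 → ℝ}

lemma integrable_densityRatio_mul_residual_add_shift (hq : HasCondDensity P A W q)
    (hA : Measurable A) (hW : Measurable W) (hq_pos : ∀ x, 0 < q x) (hδ : Measurable δ)
    (hY : Measurable Y) {M_Y : ℝ} (hY_bd : ∀ ω, |Y ω| ≤ M_Y)
    (hQ : Measurable Q) {M : ℝ} (hQ_bd : ∀ x, |Q x| ≤ M) :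
    Integrable (fun ω => densityRatio q δ (A ω, W ω) * (Y ω - Q (A ω, W ω))
      + Q (A ω + δ (W ω), W ω)) P := by
  refine .add ?_ (.of_bound (hQ.comp ((hA.add (hδ.comp hW)).prodMk hW)).aestronglyMeasurable M
    (.of_forall fun ω => hQ_bd _))
  exact (hq.integrable_densityRatio hA hW hq_pos hδ).mul_bdd
    (hY.sub (hQ.comp (hA.prodMk hW))).aestronglyMeasurable
    (.of_forall fun ω => (abs_sub _ _).trans (add_le_add (hY_bd ω) (hQ_bd _)))

lemma integral_densityRatio_mul_residual_add_shift (hq : HasCondDensity P A W q)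
    (hA : Measurable A) (hW : Measurable W) (hq_pos : ∀ x, 0 < q x) (hδ : Measurable δ)
    (hY : Measurable Y) {M_Y : ℝ} (hY_bd : ∀ ω, |Y ω| ≤ M_Y)
    (hQ₀ : Measurable Q₀) {M₀ : ℝ} (hQ₀_bd : ∀ x, |Q₀ x| ≤ M₀)
    (hQ₀_condExp : P[Y | MeasurableSpace.comap (fun ω => (A ω, W ω)) inferInstance]
      =ᵐ[P] fun ω => Q₀ (A ω, W ω))
    (hQ : Measurable Q) {M : ℝ} (hQ_bd : ∀ x, |Q x| ≤ M) :
    ∫ ω, (densityRatio q δ (A ω, W ω) * (Y ω - Q (A ω, W ω)) + Q (A ω + δ (W ω), W ω)) ∂P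
      = ∫ ω, Q₀ (A ω + δ (W ω), W ω) ∂P := by
  have hAW := hA.prodMk hW
  have hm := hAW.comap_le
  have hAW_m := comap_measurable (m := (inferInstance : MeasurableSpace (ℝ × 𝒲)))
    fun ω => (A ω, W ω)
  have hshift := (hA.add (hδ.comp hW)).prodMk hW
  have hY_int : Integrable Y P := .of_bound hY.aestronglyMeasurable M_Y (.of_forall hY_bd)
  have hQ_int : Integrable (fun ω => Q (A ω, W ω)) P :=
    .of_bound (hQ.comp hAW).aestronglyMeasurable M (.of_forall fun ω => hQ_bd _)
  have hres_int : Integrable (fun ω => Y ω - Q (A ω, W ω)) P := hY_int.sub hQ_int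
  have hHres_int : Integrable
      (fun ω => densityRatio q δ (A ω, W ω) * (Y ω - Q (A ω, W ω))) P :=
    (hq.integrable_densityRatio hA hW hq_pos hδ).mul_bdd hres_int.aestronglyMeasurable
      (.of_forall fun ω => (abs_sub _ _).trans (add_le_add (hY_bd ω) (hQ_bd _)))
  have hres_cond : P[fun ω => Y ω - Q (A ω, W ω)
      | MeasurableSpace.comap (fun ω => (A ω, W ω)) inferInstance]
      =ᵐ[P] fun ω => Q₀ (A ω, W ω) - Q (A ω, W ω) := by
    filter_upwards [condExp_sub hY_int hQ_int _, hQ₀_condExp] with ω h_sub h_Q₀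
    refine h_sub.trans ?_
    rw [Pi.sub_apply, h_Q₀, condExp_of_stronglyMeasurable hm (f := fun ω => Q (A ω, W ω))
      (hQ.comp hAW_m).stronglyMeasurable hQ_int]
  have h_tower : ∫ ω, densityRatio q δ (A ω, W ω) * (Y ω - Q (A ω, W ω)) ∂P
      = ∫ ω, densityRatio q δ (A ω, W ω) * (Q₀ (A ω, W ω) - Q (A ω, W ω)) ∂P := by
    rw [← integral_mul_condExp_of_stronglyMeasurable hm
      (f := fun ω => densityRatio q δ (A ω, W ω))
      ((measurable_densityRatio hq.measurable hδ).comp hAW_m).stronglyMeasurable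
      hHres_int hres_int]
    exact integral_congr_ae (hres_cond.mono fun ω h => by dsimp only; rw [h])
  have h_shift := hq.integral_densityRatio_mul hA hW hq_pos hδ (F := fun x => Q₀ x - Q x)
    (hQ₀.sub hQ) fun x => (abs_sub _ _).trans (add_le_add (hQ₀_bd x) (hQ_bd x))
  have hQ₀_shift_int : Integrable (fun ω => Q₀ (A ω + δ (W ω), W ω)) P :=
    .of_bound (hQ₀.comp hshift).aestronglyMeasurable M₀ (.of_forall fun ω => hQ₀_bd _)
  have hQ_shift_int : Integrable (fun ω => Q (A ω + δ (W ω), W ω)) P :=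
    .of_bound (hQ.comp hshift).aestronglyMeasurable M (.of_forall fun ω => hQ_bd _)
  rw [integral_add hHres_int hQ_shift_int, h_tower, h_shift,
    integral_sub hQ₀_shift_int hQ_shift_int, sub_add_cancel]

end HasCondDensity

end CondDensity

theorem multiple_robustness_case_i_density_general
    {Ω 𝒲 : Type*} [MeasurableSpace Ω] [StandardBorelSpace Ω]
    [MeasurableSpace 𝒲]
    (P : Measure Ω) [IsProbabilityMeasure P]
    (W : Ω → 𝒲) (hW : Measurable W)
    (A : Ω → ℝ) (hA : Measurable A)
    (Y : Ω → ℝ) (hY : Measurable Y) (hY_bd : ∃ M : ℝ, ∀ ω, |Y ω| ≤ M)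
    (q₀ : ℝ × 𝒲 → ℝ) (hq₀_meas : Measurable q₀)
    (hq₀_nonneg : ∀ x, 0 ≤ q₀ x)
    (hq₀_density : ∀ f : ℝ × 𝒲 → ℝ, Measurable f → (∃ M : ℝ, ∀ x, |f x| ≤ M) →
      ∫ ω, f (A ω, W ω) ∂P = ∫ ω, (∫ a : ℝ, f (a, W ω) * q₀ (a, W ω)) ∂P)
    (Qbar₀ : ℝ × 𝒲 → ℝ) (hQbar₀_meas : Measurable Qbar₀)
    (hQbar₀_bd : ∃ M : ℝ, ∀ x, |Qbar₀ x| ≤ M)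
    (hQbar₀_condexp :
      P[Y | MeasurableSpace.comap (fun ω => (A ω, W ω)) inferInstance]
        =ᵐ[P] fun ω => Qbar₀ (A ω, W ω))
    (δ : 𝒲 → ℝ) (hδ : Measurable δ)
    (ψ₀ : ℝ) (hψ₀ : ψ₀ = ∫ ω, Qbar₀ (A ω + δ (W ω), W ω) ∂P)
    (hq₀_pos : ∀ x, 0 < q₀ x)
    (H₀ : ℝ × 𝒲 → ℝ)
    (hH₀ : ∀ a w, H₀ (a, w) = q₀ (a - δ w, w) / q₀ (a, w))
    (C : Ω → ℝ) (hC : Measurable C) (hC01 : ∀ ω, C ω = 0 ∨ C ω = 1)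
    (hCAR : CondIndepFun
      (MeasurableSpace.comap (fun ω => (Y ω, W ω)) inferInstance)
      ((hY.prodMk hW).comap_le) C A P)
    (Qbar : ℝ × 𝒲 → ℝ) (hQbar_meas : Measurable Qbar)
    (hQbar_bd : ∃ M : ℝ, ∀ x, |Qbar x| ≤ M)
    (G : ℝ × 𝒲 → ℝ) (hG_meas : Measurable G)
    (hG_condexp :
      P[fun ω => H₀ (A ω, W ω) * (Y ω - Qbar (A ω, W ω))
          + Qbar (A ω + δ (W ω), W ω) - ψ₀
        | MeasurableSpace.comap (fun ω => (Y ω, W ω)) inferInstance]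
        =ᵐ[P] fun ω => G (Y ω, W ω))
    (g : ℝ × 𝒲 → ℝ) (hg_meas : Measurable g)
    (ε' : ℝ) (hε' : 0 < ε') (hg_bd : ∀ x, ε' ≤ g x ∧ g x ≤ 1) :
    ∫ ω, ((C ω / g (Y ω, W ω))
          * (H₀ (A ω, W ω) * (Y ω - Qbar (A ω, W ω))
            + Qbar (A ω + δ (W ω), W ω) - ψ₀)
        - (C ω / g (Y ω, W ω) - 1) * G (Y ω, W ω)) ∂P = 0 := by
  obtain ⟨M_Y, hY_bd⟩ := hY_bd
  obtain ⟨M₀, hQbar₀_bd⟩ := hQbar₀_bd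
  obtain ⟨M, hQbar_bd⟩ := hQbar_bd
  have hq₀ : HasCondDensity P A W q₀ := ⟨hq₀_meas, hq₀_nonneg, hq₀_density⟩
  obtain rfl : H₀ = densityRatio q₀ δ := funext fun x => hH₀ x.1 x.2
  have h_int := hq₀.integrable_densityRatio_mul_residual_add_shift hA hW hq₀_pos hδ hY hY_bd
    hQbar_meas hQbar_bd
  have hD_mean : ∫ ω, (densityRatio q₀ δ (A ω, W ω) * (Y ω - Qbar (A ω, W ω))
      + Qbar (A ω + δ (W ω), W ω) - ψ₀) ∂P = 0 := by
    rw [integral_sub h_int (integrable_const ψ₀), hq₀.integral_densityRatio_mul_residual_add_shift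
      hA hW hq₀_pos hδ hY hY_bd hQbar₀_meas hQbar₀_bd hQbar₀_condexp hQbar_meas hQbar_bd, hψ₀]
    simp
  have hH₀_meas := measurable_densityRatio hq₀_meas hδ
  exact (integral_ipw_augmented_eq_integral_of_condIndepFun (hY.prodMk hW) hA hC hC01 hCAR
    hg_meas hε' (fun x => (hg_bd x).1) (d := fun p => densityRatio q₀ δ (p.2, p.1.2)
      * (p.1.1 - Qbar (p.2, p.1.2)) + Qbar (p.2 + δ p.1.2, p.1.2) - ψ₀) (by fun_prop)
    (h_int.sub (integrable_const ψ₀)) hG_meas hG_condexp).trans hD_mean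

/-- Multiple robustness, case (i) with correct exposure density: if the conditional
influence-function regression `G` is correctly specified, the observed-data EIF has
mean zero for an arbitrary sampling mechanism `g` and an arbitrary bounded outcome
regression `Q̄` (with correct density ratio `H₀`). -/
theorem multiple_robustness_case_i_density
    {Ω 𝒲 : Type*} [MeasurableSpace Ω] [StandardBorelSpace Ω] [Nonempty Ω]
    [MeasurableSpace 𝒲]
    (P : Measure Ω) [IsProbabilityMeasure P]
    (W : Ω → 𝒲) (hW : Measurable W)
    (A : Ω → ℝ) (hA : Measurable A)
    (Y : Ω → ℝ) (hY : Measurable Y) (hY_bd : ∃ M : ℝ, ∀ ω, |Y ω| ≤ M)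
    (q₀ : ℝ × 𝒲 → ℝ) (hq₀_meas : Measurable q₀)
    (hq₀_nonneg : ∀ x, 0 ≤ q₀ x)
    (hq₀_density : ∀ f : ℝ × 𝒲 → ℝ, Measurable f → (∃ M : ℝ, ∀ x, |f x| ≤ M) →
      ∫ ω, f (A ω, W ω) ∂P = ∫ ω, (∫ a : ℝ, f (a, W ω) * q₀ (a, W ω)) ∂P)
    (Qbar₀ : ℝ × 𝒲 → ℝ) (hQbar₀_meas : Measurable Qbar₀)
    (hQbar₀_bd : ∃ M : ℝ, ∀ x, |Qbar₀ x| ≤ M)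
    (hQbar₀_condexp :
      P[Y | MeasurableSpace.comap (fun ω => (A ω, W ω)) inferInstance]
        =ᵐ[P] fun ω => Qbar₀ (A ω, W ω))
    (δ : 𝒲 → ℝ) (hδ : Measurable δ)
    (ψ₀ : ℝ) (hψ₀ : ψ₀ = ∫ ω, Qbar₀ (A ω + δ (W ω), W ω) ∂P)
    (hq₀_pos : ∀ x, 0 < q₀ x)
    (H₀ : ℝ × 𝒲 → ℝ)
    (hH₀ : ∀ a w, H₀ (a, w) = q₀ (a - δ w, w) / q₀ (a, w))
    (hH₀_bd : ∃ M : ℝ, ∀ ω, |H₀ (A ω, W ω)| ≤ M)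
    (C : Ω → ℝ) (hC : Measurable C) (hC01 : ∀ ω, C ω = 0 ∨ C ω = 1)
    (g₀ : ℝ × 𝒲 → ℝ) (hg₀_meas : Measurable g₀)
    (ε : ℝ) (hε : 0 < ε) (hg₀_bd : ∀ x, ε ≤ g₀ x ∧ g₀ x ≤ 1)
    (hg₀_condexp :
      P[C | MeasurableSpace.comap (fun ω => (Y ω, W ω)) inferInstance]
        =ᵐ[P] fun ω => g₀ (Y ω, W ω))
    (hCAR : CondIndepFun
      (MeasurableSpace.comap (fun ω => (Y ω, W ω)) inferInstance)
      ((hY.prodMk hW).comap_le) C A P)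
    (Qbar : ℝ × 𝒲 → ℝ) (hQbar_meas : Measurable Qbar)
    (hQbar_bd : ∃ M : ℝ, ∀ x, |Qbar x| ≤ M)
    (G : ℝ × 𝒲 → ℝ) (hG_meas : Measurable G) (hG_bd : ∃ M : ℝ, ∀ x, |G x| ≤ M)
    (hG_condexp :
      P[fun ω => H₀ (A ω, W ω) * (Y ω - Qbar (A ω, W ω))
          + Qbar (A ω + δ (W ω), W ω) - ψ₀
        | MeasurableSpace.comap (fun ω => (Y ω, W ω)) inferInstance]
        =ᵐ[P] fun ω => G (Y ω, W ω))
    (g : ℝ × 𝒲 → ℝ) (hg_meas : Measurable g)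
    (ε' : ℝ) (hε' : 0 < ε') (hg_bd : ∀ x, ε' ≤ g x ∧ g x ≤ 1) :
    ∫ ω, ((C ω / g (Y ω, W ω))
          * (H₀ (A ω, W ω) * (Y ω - Qbar (A ω, W ω))
            + Qbar (A ω + δ (W ω), W ω) - ψ₀)
        - (C ω / g (Y ω, W ω) - 1) * G (Y ω, W ω)) ∂P = 0 :=
  multiple_robustness_case_i_density_general P W hW A hA Y hY hY_bd q₀ hq₀_meas hq₀_nonneg
    hq₀_density Qbar₀ hQbar₀_meas hQbar₀_bd hQbar₀_condexp δ hδ ψ₀ hψ₀ hq₀_pos H₀ hH₀ C hC hC01 hCAR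
    Qbar hQbar_meas hQbar_bd G hG_meas hG_condexp g hg_meas ε' hε' hg_bd
end

section
/- Variance decomposition of the observed-data efficient influence function: let D^F : 𝒲 × ℝ × ℝ → ℝ be bounded measurable and let G₀ : ℝ × 𝒲 → ℝ be a bounded measurable function with G₀(Y, W) = E[D^F(W, A, Y) ∣ σ(Y, W)] a.s. Then E[((C / g₀(Y, W)) D^F(W, A, Y) − (C / g₀(Y, W) − 1) G₀(Y, W))²] = E[D^F(W, A, Y)²] + E[(1 / g₀(Y, W) − 1) · (D^F(W, A, Y) − G₀(Y, W))²]. Hence the second moment of the observed-data influence function exceeds that of the full-data influence function by an inflation term reflecting the two-phase sampling. -/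
/-!
Write `g = g₀(Y, W)`, `D = D^F(W, A, Y)` and `G = G₀(Y, W)`. The observed-data influence function
is `(C / g) (D - G) + G`, so, as `C² = C`, its square is `C k + G²` with
`k = aipwSqCoeff g D G = ((D - G) / g)² + 2 (D - G) G / g`, a function of `(A, (Y, W))`.
Because `C` is conditionally independent of `A` given `(Y, W)` and `E[C | Y, W] = g`, the measures
`C • P` and `g • P` agree on rectangles `{A ∈ t, (Y, W) ∈ u}`, hence have the same push-forward
along `(A, (Y, W))`. Thus `E[C k] = E[g k]`, and `g k + G² = D² + (1 / g - 1) (D - G)²` is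
pointwise algebra.
-/

open MeasureTheory ProbabilityTheory

section WithDensity

variable {Ω α : Type*} [MeasurableSpace Ω] [MeasurableSpace α] {P : Measure Ω} {f : Ω → ℝ}
  {T : Ω → α}

lemma map_withDensity_ofReal_apply (hf : Integrable f P) (hf_nonneg : 0 ≤ f) (hT : Measurable T)
    {s : Set α} (hs : MeasurableSet s) :
    (P.withDensity fun ω => ENNReal.ofReal (f ω)).map T s
      = ENNReal.ofReal (∫ ω in T ⁻¹' s, f ω ∂P) := by
  rw [Measure.map_apply hT hs, withDensity_apply _ (hT hs),
    ofReal_integral_eq_lintegral_ofReal hf.restrict (.of_forall hf_nonneg)]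

lemma integral_map_withDensity_ofReal (hf : Measurable f) (hf_nonneg : 0 ≤ f) (hT : Measurable T)
    {h : α → ℝ} (hh : Measurable h) :
    ∫ x, h x ∂(P.withDensity fun ω => ENNReal.ofReal (f ω)).map T = ∫ ω, f ω * h (T ω) ∂P := by
  rw [integral_map hT.aemeasurable hh.aestronglyMeasurable,
    integral_withDensity_eq_integral_toReal_smul hf.ennreal_ofReal
      (.of_forall fun _ => ENNReal.ofReal_lt_top)]
  simp only [ENNReal.toReal_ofReal (hf_nonneg _), smul_eq_mul]

end WithDensity

lemma integral_mul_comp_eq_of_setIntegral_preimage_prod_eq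
    {Ω β γ : Type*} [MeasurableSpace Ω] [MeasurableSpace β] [MeasurableSpace γ]
    {P : Measure Ω} {f₁ f₂ : Ω → ℝ} (hf₁ : Measurable f₁) (hf₂ : Measurable f₂)
    (hf₁_int : Integrable f₁ P) (hf₂_int : Integrable f₂ P) (hf₁_nonneg : 0 ≤ f₁)
    (hf₂_nonneg : 0 ≤ f₂) {T : Ω → β × γ} (hT : Measurable T)
    (hrect : ∀ ⦃t : Set β⦄ ⦃u : Set γ⦄, MeasurableSet t → MeasurableSet u →
      ∫ ω in T ⁻¹' (t ×ˢ u), f₁ ω ∂P = ∫ ω in T ⁻¹' (t ×ˢ u), f₂ ω ∂P)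
    {h : β × γ → ℝ} (hh : Measurable h) :
    ∫ ω, f₁ ω * h (T ω) ∂P = ∫ ω, f₂ ω * h (T ω) ∂P := by
  have : IsFiniteMeasure ((P.withDensity fun ω => ENNReal.ofReal (f₁ ω)).map T) :=
    ⟨by simp [map_withDensity_ofReal_apply hf₁_int hf₁_nonneg hT .univ]⟩
  have hmap : (P.withDensity fun ω => ENNReal.ofReal (f₁ ω)).map T
      = (P.withDensity fun ω => ENNReal.ofReal (f₂ ω)).map T :=
    Measure.ext_prod fun ht hu => by
      rw [map_withDensity_ofReal_apply hf₁_int hf₁_nonneg hT (ht.prod hu),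
        map_withDensity_ofReal_apply hf₂_int hf₂_nonneg hT (ht.prod hu), hrect ht hu]
  rw [← integral_map_withDensity_ofReal hf₁ hf₁_nonneg hT hh,
    ← integral_map_withDensity_ofReal hf₂ hf₂_nonneg hT hh, hmap]

lemma eq_indicator_preimage_one {Ω : Type*} {C : Ω → ℝ} (hC01 : ∀ ω, C ω = 0 ∨ C ω = 1) :
    C = (C ⁻¹' {1}).indicator fun _ => 1 := by
  funext ω
  rcases hC01 ω with h | h <;> simp [h]

section CondIndep

variable {Ω β : Type*} {m mΩ : MeasurableSpace Ω} [StandardBorelSpace Ω] {hm : m ≤ mΩ}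
  {P : Measure Ω} [IsFiniteMeasure P] [MeasurableSpace β] {C g : Ω → ℝ} {A : Ω → β}

lemma setIntegral_preimage_inter_eq_of_condIndepFun (hC : Measurable C)
    (hC01 : ∀ ω, C ω = 0 ∨ C ω = 1) (hA : Measurable A) (hg : StronglyMeasurable[m] g)
    (hCg : P[C | m] =ᵐ[P] g) (hCA : CondIndepFun m hm C A P) {t : Set β} (ht : MeasurableSet t)
    {u : Set Ω} (hu : MeasurableSet[m] u) :
    ∫ ω in A ⁻¹' t ∩ u, C ω ∂P = ∫ ω in A ⁻¹' t ∩ u, g ω ∂P := by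
  have hg_int : Integrable g P := integrable_condExp.congr hCg
  have hAt : MeasurableSet (A ⁻¹' t) := hA ht
  have hS : MeasurableSet (C ⁻¹' {1}) := hC (measurableSet_singleton 1)
  have hmul : (A ⁻¹' t).indicator g = g * (A ⁻¹' t).indicator fun _ => 1 := by
    funext ω; by_cases hω : ω ∈ A ⁻¹' t <;> simp [hω]
  have hfactor : P⟦C ⁻¹' {1} ∩ A ⁻¹' t | m⟧ =ᵐ[P] fun ω => g ω * (P⟦A ⁻¹' t | m⟧) ω := by
    filter_upwards [(condIndepFun_iff_condExp_inter_preimage_eq_mul hC hA).1 hCA _ _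
      (measurableSet_singleton 1) ht, hCg] with ω hω hgω
    rw [hω, ← hgω, ← eq_indicator_preimage_one hC01]
  have hpull : P[(A ⁻¹' t).indicator g | m] =ᵐ[P] fun ω => g ω * (P⟦A ⁻¹' t | m⟧) ω := by
    rw [hmul]
    exact condExp_mul_of_stronglyMeasurable_left hg (hmul ▸ hg_int.indicator hAt)
      ((integrable_const 1).indicator hAt)
  calc ∫ ω in A ⁻¹' t ∩ u, C ω ∂P
      = ∫ ω in u, (C ⁻¹' {1} ∩ A ⁻¹' t).indicator (fun _ => 1) ω ∂P := by
        have hset : A ⁻¹' t ∩ u ∩ C ⁻¹' {1} = u ∩ (C ⁻¹' {1} ∩ A ⁻¹' t) := by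
          ext; simp only [Set.mem_inter_iff]; tauto
        conv_lhs => rw [eq_indicator_preimage_one hC01]
        rw [setIntegral_indicator hS, setIntegral_indicator (hS.inter hAt), hset]
    _ = ∫ ω in u, P[(A ⁻¹' t).indicator g | m] ω ∂P := by
        rw [← setIntegral_condExp hm ((integrable_const 1).indicator (hS.inter hAt)) hu]
        exact setIntegral_congr_ae (hm u hu) ((hfactor.trans hpull.symm).mono fun _ h _ => h)
    _ = ∫ ω in A ⁻¹' t ∩ u, g ω ∂P := by
        rw [setIntegral_condExp hm (hg_int.indicator hAt) hu, setIntegral_indicator hAt,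
          Set.inter_comm]

end CondIndep

lemma integral_mul_comp_eq_of_condIndepFun {Ω β γ : Type*} [MeasurableSpace Ω]
    [StandardBorelSpace Ω] [MeasurableSpace β] [MeasurableSpace γ] {P : Measure Ω}
    [IsFiniteMeasure P] {Z : Ω → γ} (hZ : Measurable Z) {A : Ω → β} (hA : Measurable A)
    {C : Ω → ℝ} (hC : Measurable C) (hC01 : ∀ ω, C ω = 0 ∨ C ω = 1) {g : γ → ℝ}
    (hg : Measurable g) (hg_nonneg : 0 ≤ g)
    (hCg : P[C | MeasurableSpace.comap Z inferInstance] =ᵐ[P] fun ω => g (Z ω))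
    (hCA : CondIndepFun (MeasurableSpace.comap Z inferInstance) hZ.comap_le C A P)
    {h : β × γ → ℝ} (hh : Measurable h) :
    ∫ ω, C ω * h (A ω, Z ω) ∂P = ∫ ω, g (Z ω) * h (A ω, Z ω) ∂P := by
  have hC_nonneg : 0 ≤ C := fun ω => by rcases hC01 ω with h | h <;> simp [h]
  have hC_int : Integrable C P :=
    .of_bound hC.aestronglyMeasurable 1
      (.of_forall fun ω => by rcases hC01 ω with h | h <;> simp [h])
  refine integral_mul_comp_eq_of_setIntegral_preimage_prod_eq hC (hg.comp hZ) hC_int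
    (integrable_condExp.congr hCg) hC_nonneg (fun ω => hg_nonneg (Z ω)) (hA.prodMk hZ)
    (fun t u ht hu => ?_) hh
  rw [Set.mk_preimage_prod]
  exact setIntegral_preimage_inter_eq_of_condIndepFun hC hC01 hA
    ((hg.comp (comap_measurable Z)).stronglyMeasurable) hCg hCA ht ⟨u, hu, rfl⟩

lemma MeasureTheory.MemLp.pow_top {α 𝕜 : Type*} [MeasurableSpace α] [NormedRing 𝕜]
    {μ : Measure α} {f : α → 𝕜} (hf : MemLp f ⊤ μ) (n : ℕ) : MemLp (fun x => f x ^ n) ⊤ μ := by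
  induction n with
  | zero => simpa using memLp_top_const (1 : 𝕜)
  | succ n ih => simpa only [pow_succ] using hf.mul' ih

noncomputable def aipwSqCoeff (g d G : ℝ) : ℝ :=
  ((d - G) * (1 / g)) ^ 2 + 2 * ((d - G) * G * (1 / g))

lemma aipw_sq_eq {c g d G : ℝ} (hc : c = 0 ∨ c = 1) :
    (c / g * d - (c / g - 1) * G) ^ 2 = c * aipwSqCoeff g d G + G ^ 2 := by
  rcases hc with rfl | rfl <;> simp only [aipwSqCoeff] <;> ring

lemma mul_aipwSqCoeff_add_sq_eq {g d G : ℝ} (hg : g ≠ 0) :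
    g * aipwSqCoeff g d G + G ^ 2 = d ^ 2 + (1 / g - 1) * (d - G) ^ 2 := by
  unfold aipwSqCoeff
  field_simp
  ring

lemma integral_aipw_sq_eq_of_integral_mul_eq {Ω : Type*} [MeasurableSpace Ω] {P : Measure Ω}
    [IsFiniteMeasure P] {c g d G : Ω → ℝ} (hc01 : ∀ ω, c ω = 0 ∨ c ω = 1) (hg_pos : ∀ ω, 0 < g ω)
    (hc : MemLp c ⊤ P) (hg : MemLp g ⊤ P) (hg_inv : MemLp (fun ω => 1 / g ω) ⊤ P)
    (hd : MemLp d ⊤ P) (hG : MemLp G ⊤ P)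
    (hcg : ∫ ω, c ω * aipwSqCoeff (g ω) (d ω) (G ω) ∂P
      = ∫ ω, g ω * aipwSqCoeff (g ω) (d ω) (G ω) ∂P) :
    ∫ ω, (c ω / g ω * d ω - (c ω / g ω - 1) * G ω) ^ 2 ∂P
      = (∫ ω, d ω ^ 2 ∂P) + ∫ ω, (1 / g ω - 1) * (d ω - G ω) ^ 2 ∂P := by
  have hU := hd.sub hG
  have hk : MemLp (fun ω => aipwSqCoeff (g ω) (d ω) (G ω)) ⊤ P :=
    ((hg_inv.mul' hU).pow_top 2).add ((hg_inv.mul' (hG.mul' hU : MemLp _ ⊤ P)).const_mul 2)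
  have hG2 := (hG.pow_top 2).integrable le_top
  calc _ = ∫ ω, (c ω * aipwSqCoeff (g ω) (d ω) (G ω) + G ω ^ 2) ∂P :=
        integral_congr_ae (.of_forall fun ω => aipw_sq_eq (hc01 ω))
    _ = ∫ ω, (g ω * aipwSqCoeff (g ω) (d ω) (G ω) + G ω ^ 2) ∂P := by
        rw [integral_add ((hk.mul' hc).integrable le_top) hG2, hcg,
          integral_add ((hk.mul' hg).integrable le_top) hG2]
    _ = ∫ ω, (d ω ^ 2 + (1 / g ω - 1) * (d ω - G ω) ^ 2) ∂P :=
        integral_congr_ae (.of_forall fun ω => mul_aipwSqCoeff_add_sq_eq (hg_pos ω).ne')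
    _ = _ := integral_add ((hd.pow_top 2).integrable le_top)
        (((hU.pow_top 2).mul' (hg_inv.sub (memLp_top_const 1))).integrable le_top)

theorem observed_data_eif_variance_decomposition_general
    {Ω 𝒲 : Type*} [MeasurableSpace Ω] [StandardBorelSpace Ω]
    [MeasurableSpace 𝒲]
    (P : Measure Ω) [IsProbabilityMeasure P]
    (W : Ω → 𝒲) (hW : Measurable W)
    (A : Ω → ℝ) (hA : Measurable A)
    (Y : Ω → ℝ) (hY : Measurable Y)
    (C : Ω → ℝ) (hC : Measurable C) (hC01 : ∀ ω, C ω = 0 ∨ C ω = 1)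
    (g₀ : ℝ × 𝒲 → ℝ) (hg₀_meas : Measurable g₀)
    (ε : ℝ) (hε : 0 < ε) (hg₀_bd : ∀ x, ε ≤ g₀ x ∧ g₀ x ≤ 1)
    (hg₀_condexp :
      P[C | MeasurableSpace.comap (fun ω => (Y ω, W ω)) inferInstance]
        =ᵐ[P] fun ω => g₀ (Y ω, W ω))
    (hCAR : CondIndepFun
      (MeasurableSpace.comap (fun ω => (Y ω, W ω)) inferInstance)
      ((hY.prodMk hW).comap_le) C A P)
    (DF : 𝒲 × ℝ × ℝ → ℝ) (hDF_meas : Measurable DF)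
    (hDF_bd : ∃ M : ℝ, ∀ x, |DF x| ≤ M)
    (G₀ : ℝ × 𝒲 → ℝ) (hG₀_meas : Measurable G₀) (hG₀_bd : ∃ M : ℝ, ∀ x, |G₀ x| ≤ M) :
    ∫ ω, ((C ω / g₀ (Y ω, W ω)) * DF (W ω, A ω, Y ω)
        - (C ω / g₀ (Y ω, W ω) - 1) * G₀ (Y ω, W ω)) ^ 2 ∂P
      = (∫ ω, DF (W ω, A ω, Y ω) ^ 2 ∂P)
        + ∫ ω, (1 / g₀ (Y ω, W ω) - 1)
            * (DF (W ω, A ω, Y ω) - G₀ (Y ω, W ω)) ^ 2 ∂P := by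
  obtain ⟨M₁, hM₁⟩ := hDF_bd
  obtain ⟨M₂, hM₂⟩ := hG₀_bd
  have hg₀_pos (x) : 0 < g₀ x := hε.trans_le (hg₀_bd x).1
  have hZ : Measurable fun ω => (Y ω, W ω) := hY.prodMk hW
  refine integral_aipw_sq_eq_of_integral_mul_eq hC01 (fun ω => hg₀_pos _)
    (memLp_top_of_bound hC.aestronglyMeasurable 1
      (.of_forall fun ω => by rcases hC01 ω with h | h <;> simp [h]))
    (memLp_top_of_bound (hg₀_meas.comp hZ).aestronglyMeasurable 1
      (.of_forall fun ω => by simpa [abs_of_pos (hg₀_pos _)] using (hg₀_bd _).2))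
    (memLp_top_of_bound (measurable_const.div (hg₀_meas.comp hZ)).aestronglyMeasurable (1 / ε)
      (.of_forall fun ω => by
        simpa [abs_of_pos (hg₀_pos _)] using one_div_le_one_div_of_le hε (hg₀_bd _).1))
    (memLp_top_of_bound (hDF_meas.comp (hW.prodMk (hA.prodMk hY))).aestronglyMeasurable M₁
      (.of_forall fun _ => hM₁ _))
    (memLp_top_of_bound (hG₀_meas.comp hZ).aestronglyMeasurable M₂ (.of_forall fun _ => hM₂ _)) ?_
  exact integral_mul_comp_eq_of_condIndepFun hZ hA hC hC01 hg₀_meas (fun x => (hg₀_pos x).le)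
    hg₀_condexp hCAR (h := fun x => aipwSqCoeff (g₀ x.2) (DF (x.2.2, x.1, x.2.1)) (G₀ x.2))
    (by unfold aipwSqCoeff; fun_prop)

/-- Variance decomposition of the observed-data efficient influence function:
the second moment of the observed-data influence function equals that of the
full-data influence function plus an inflation term reflecting two-phase
sampling. -/
theorem observed_data_eif_variance_decomposition
    {Ω 𝒲 : Type*} [MeasurableSpace Ω] [StandardBorelSpace Ω] [Nonempty Ω]
    [MeasurableSpace 𝒲]
    (P : Measure Ω) [IsProbabilityMeasure P]
    (W : Ω → 𝒲) (hW : Measurable W)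
    (A : Ω → ℝ) (hA : Measurable A)
    (Y : Ω → ℝ) (hY : Measurable Y)
    (C : Ω → ℝ) (hC : Measurable C) (hC01 : ∀ ω, C ω = 0 ∨ C ω = 1)
    (g₀ : ℝ × 𝒲 → ℝ) (hg₀_meas : Measurable g₀)
    (ε : ℝ) (hε : 0 < ε) (hg₀_bd : ∀ x, ε ≤ g₀ x ∧ g₀ x ≤ 1)
    (hg₀_condexp :
      P[C | MeasurableSpace.comap (fun ω => (Y ω, W ω)) inferInstance]
        =ᵐ[P] fun ω => g₀ (Y ω, W ω))
    (hCAR : CondIndepFun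
      (MeasurableSpace.comap (fun ω => (Y ω, W ω)) inferInstance)
      ((hY.prodMk hW).comap_le) C A P)
    (DF : 𝒲 × ℝ × ℝ → ℝ) (hDF_meas : Measurable DF)
    (hDF_bd : ∃ M : ℝ, ∀ x, |DF x| ≤ M)
    (G₀ : ℝ × 𝒲 → ℝ) (hG₀_meas : Measurable G₀) (hG₀_bd : ∃ M : ℝ, ∀ x, |G₀ x| ≤ M)
    (hG₀_condexp :
      P[fun ω => DF (W ω, A ω, Y ω)
        | MeasurableSpace.comap (fun ω => (Y ω, W ω)) inferInstance]
        =ᵐ[P] fun ω => G₀ (Y ω, W ω)) :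
    ∫ ω, ((C ω / g₀ (Y ω, W ω)) * DF (W ω, A ω, Y ω)
        - (C ω / g₀ (Y ω, W ω) - 1) * G₀ (Y ω, W ω)) ^ 2 ∂P
      = (∫ ω, DF (W ω, A ω, Y ω) ^ 2 ∂P)
        + ∫ ω, (1 / g₀ (Y ω, W ω) - 1)
            * (DF (W ω, A ω, Y ω) - G₀ (Y ω, W ω)) ^ 2 ∂P :=
  observed_data_eif_variance_decomposition_general P W hW A hA Y hY C hC hC01 g₀ hg₀_meas ε hε
    hg₀_bd hg₀_condexp hCAR DF hDF_meas hDF_bd G₀ hG₀_meas hG₀_bd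
end
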